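/- Four-point mixed difference bound for linear strongly monotone equations: let $U$ be a real Hilbert space, $\nu>0$, and let $A, A_\ell, \tilde{A}, \tilde{A}_\ell : U \to U$ be bounded self-adjoint positive semidefinite operators and $b, b_\ell, \tilde{b}, \tilde{b}_\ell \in U$. Let $u, u_\ell, \tilde{u}, \tilde{u}_\ell$ solve $(A+\nu I)u = b$, $(A_\ell+\nu I)u_\ell = b_\ell$, $(\tilde{A}+\nu I)\tilde{u} = \tilde{b}$, $(\tilde{A}_\ell+\nu I)\tilde{u}_\ell = \tilde{b}_\ell$, and suppose moreover $\tilde{A} = A$, $\tilde{A}_\ell = A_\ell$ (same operators, different data) with $b - b_\ell = \tilde{b} - \tilde{b}_\ell =: \delta$. Then $\Delta u := u - u_\ell - \tilde{u} + \tilde{u}_\ell$ satisfies $\nu\|\Delta u\| \le \|(A - A_\ell)(u - \tilde{u})\|$. -/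

import Mathlib

open scoped RealInnerProductSpace

/- Combining the four equations, the data cancel and `Δ = u - uℓ - tu + tuℓ` solves
`(Aℓ + ν) Δ = -(A - Aℓ)(u - tu)`, and monotonicity of `Aℓ` gives `ν ‖Δ‖² ≤ ⟪(Aℓ + ν) Δ, Δ⟫`,
which Cauchy–Schwarz bounds by `‖(A - Aℓ)(u - tu)‖ ‖Δ‖`. -/

theorem mul_norm_le_norm_add_smul_of_inner_nonneg {E : Type*} [NormedAddCommGroup E]
    [InnerProductSpace ℝ E] {v x : E} (ν : ℝ) (h : 0 ≤ ⟪v, x⟫) :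
    ν * ‖x‖ ≤ ‖v + ν • x‖ := by
  rcases (norm_nonneg x).eq_or_lt with hx | hx
  · rw [← hx, mul_zero]
    exact norm_nonneg _
  · refine le_of_mul_le_mul_right ?_ hx
    calc ν * ‖x‖ * ‖x‖ ≤ ⟪v, x⟫ + ν * ‖x‖ ^ 2 := by nlinarith
      _ = ⟪v + ν • x, x⟫ := by
        rw [inner_add_left, real_inner_smul_left, real_inner_self_eq_norm_sq]
      _ ≤ ‖v + ν • x‖ * ‖x‖ := real_inner_le_norm _ _

theorem apply_second_difference_add_smul {R M : Type*} [CommRing R] [AddCommGroup M]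
    [Module R M] [TopologicalSpace M] [IsTopologicalAddGroup M] (A Aℓ : M →L[R] M) (ν : R)
    {b bℓ tb tbℓ u uℓ tu tuℓ : M}
    (hu : A u + ν • u = b) (huℓ : Aℓ uℓ + ν • uℓ = bℓ)
    (htu : A tu + ν • tu = tb) (htuℓ : Aℓ tuℓ + ν • tuℓ = tbℓ)
    (hdata : b - bℓ = tb - tbℓ) :
    Aℓ (u - uℓ - tu + tuℓ) + ν • (u - uℓ - tu + tuℓ) = -((A - Aℓ) (u - tu)) := by
  simp only [sub_apply, map_sub, map_add]
  linear_combination (norm := module) hu - huℓ - htu + htuℓ + hdata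

theorem four_point_mixed_difference_bound_general
    {U : Type*} [NormedAddCommGroup U] [InnerProductSpace ℝ U]
    (ν : ℝ)
    (A Aℓ : U →L[ℝ] U)
    (hpsdAℓ : ∀ x : U, 0 ≤ (inner ℝ (Aℓ x) x : ℝ))
    (b bℓ tb tbℓ : U)
    (u uℓ tu tuℓ : U)
    (hu : A u + ν • u = b)
    (huℓ : Aℓ uℓ + ν • uℓ = bℓ)
    (htu : A tu + ν • tu = tb)
    (htuℓ : Aℓ tuℓ + ν • tuℓ = tbℓ)
    (hdata : b - bℓ = tb - tbℓ) :
    ν * ‖u - uℓ - tu + tuℓ‖ ≤ ‖(A - Aℓ) (u - tu)‖ := by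
  calc ν * ‖u - uℓ - tu + tuℓ‖
      ≤ ‖Aℓ (u - uℓ - tu + tuℓ) + ν • (u - uℓ - tu + tuℓ)‖ :=
        mul_norm_le_norm_add_smul_of_inner_nonneg ν (hpsdAℓ _)
    _ = ‖(A - Aℓ) (u - tu)‖ := by
        rw [apply_second_difference_add_smul A Aℓ ν hu huℓ htu htuℓ hdata, norm_neg]

theorem four_point_mixed_difference_bound
    {U : Type*} [NormedAddCommGroup U] [InnerProductSpace ℝ U]
    (ν : ℝ) (hν : 0 < ν)
    (A Aℓ : U →L[ℝ] U)
    (hsaA : ∀ x y : U, (inner ℝ (A x) y : ℝ) = inner ℝ x (A y))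
    (hsaAℓ : ∀ x y : U, (inner ℝ (Aℓ x) y : ℝ) = inner ℝ x (Aℓ y))
    (hpsdA : ∀ x : U, 0 ≤ (inner ℝ (A x) x : ℝ))
    (hpsdAℓ : ∀ x : U, 0 ≤ (inner ℝ (Aℓ x) x : ℝ))
    (b bℓ tb tbℓ : U)
    (u uℓ tu tuℓ : U)
    (hu : A u + ν • u = b)
    (huℓ : Aℓ uℓ + ν • uℓ = bℓ)
    (htu : A tu + ν • tu = tb)
    (htuℓ : Aℓ tuℓ + ν • tuℓ = tbℓ)
    (hdata : b - bℓ = tb - tbℓ) :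
    ν * ‖u - uℓ - tu + tuℓ‖ ≤ ‖(A - Aℓ) (u - tu)‖ :=
  four_point_mixed_difference_bound_general ν A Aℓ hpsdAℓ b bℓ tb tbℓ u uℓ tu tuℓ hu huℓ htu htuℓ
    hdata
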